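/- Let p ≥ 1 and 0 ≤ m ≤ p−2 be integers. Then there exists a unique real number υ > arccosh(3/2) such that φ(υ)/υ = (m+1)/p, where φ(u) = arccosh(cosh u − 1/2); moreover, for u > arccosh(3/2), φ(u)/u > (m+1)/p holds if and only if u > υ, and φ(u)/u < (m+1)/p if and only if u < υ. Furthermore υ < √p. -/

import Mathlib

noncomputable def arcosh (x : ℝ) : ℝ := Real.log (x + Real.sqrt (x ^ 2 - 1))

noncomputable def kappa : ℝ := arcosh (3 / 2)

noncomputable def phi (u : ℝ) : ℝ := arcosh (Real.cosh u - 1 / 2)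

/-!
Since `cosh φ(u) = cosh u - 1/2` and `φ(u) < u`, the chain rule gives
`φ'(u) = sinh u / sinh φ(u) > 1`, so `φ(u) - u` increases; together with `φ(u) < u` this makes
`φ(u)/u` strictly increasing on `[κ, ∞)`. It vanishes at `κ`, so the intermediate value theorem
does the rest once `φ(√p)/√p > 1 - 1/p ≥ (m+1)/p`. For that, with `s = √p` and `a = φ(s)`,
convexity of `cosh` gives `(s - a) sinh a ≤ cosh s - cosh a = 1/2`, while `cosh s ≥ 1 + s²/2`
forces `sinh a > s/2`; hence `s - a < 1/s`.
-/

-- `arcosh` is definitionally `Real.arcosh`, so Mathlib's lemmas about the latter apply to it.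
open Real Set

lemma cosh_add_ge_cosh_add_mul_sinh {a t : ℝ} (ha : 0 ≤ a) (ht : 0 ≤ t) :
    cosh a + t * sinh a ≤ cosh (a + t) := by
  rw [cosh_add]
  nlinarith [one_le_cosh a, one_le_cosh t, self_le_sinh_iff.2 ht, sinh_nonneg_iff.2 ha]

lemma one_add_sq_div_two_le_cosh {x : ℝ} (hx : 0 ≤ x) : 1 + x ^ 2 / 2 ≤ cosh x := by
  have hsinh : x / 2 ≤ sinh (x / 2) := self_le_sinh_iff.2 (by linarith)
  rw [← mul_div_cancel₀ x two_ne_zero, cosh_two_mul, cosh_sq]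
  nlinarith

lemma cosh_kappa : cosh kappa = 3 / 2 := cosh_arcosh (by norm_num)

lemma kappa_pos : 0 < kappa := arcosh_pos (by norm_num)

lemma kappa_lt_iff {u : ℝ} (hu : 0 ≤ u) : kappa < u ↔ 3 / 2 < cosh u := by
  rw [← cosh_kappa, cosh_lt_cosh, abs_of_pos kappa_pos, abs_of_nonneg hu]

lemma one_le_cosh_sub_half {u : ℝ} (hu : kappa ≤ u) : 1 ≤ cosh u - 1 / 2 := by
  have : cosh kappa ≤ cosh u := by
    rwa [cosh_le_cosh, abs_of_pos kappa_pos, abs_of_nonneg (kappa_pos.le.trans hu)]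
  linarith [cosh_kappa]

lemma one_lt_cosh_sub_half {u : ℝ} (hu : kappa < u) : 1 < cosh u - 1 / 2 := by
  linarith [(kappa_lt_iff (kappa_pos.trans hu).le).1 hu]

lemma cosh_phi {u : ℝ} (hu : kappa ≤ u) : cosh (phi u) = cosh u - 1 / 2 :=
  cosh_arcosh (one_le_cosh_sub_half hu)

lemma phi_nonneg {u : ℝ} (hu : kappa ≤ u) : 0 ≤ phi u :=
  arcosh_nonneg (one_le_cosh_sub_half hu)

lemma phi_pos {u : ℝ} (hu : kappa < u) : 0 < phi u :=
  arcosh_pos (one_lt_cosh_sub_half hu)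

lemma phi_kappa : phi kappa = 0 := by
  rw [phi, cosh_kappa]
  norm_num
  exact Real.arcosh_zero

lemma phi_lt_self {u : ℝ} (hu : kappa ≤ u) : phi u < u := by
  have h : cosh (phi u) < cosh u := by linarith [cosh_phi hu]
  rwa [cosh_lt_cosh, abs_of_nonneg (phi_nonneg hu),
    abs_of_pos (kappa_pos.trans_le hu)] at h

lemma continuousOn_phi : ContinuousOn phi (Ici kappa) :=
  continuousOn_arcosh.comp (continuous_cosh.sub continuous_const).continuousOn
    fun _ hu => one_le_cosh_sub_half hu

lemma hasDerivAt_phi {u : ℝ} (hu : kappa < u) : HasDerivAt phi (sinh u / sinh (phi u)) u := by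
  have hx := one_lt_cosh_sub_half hu
  have h := (hasDerivAt_arcosh hx).comp u ((hasDerivAt_cosh u).sub_const (1 / 2))
  rwa [← sinh_arcosh hx.le, inv_mul_eq_div] at h

lemma strictMonoOn_phi_sub_self : StrictMonoOn (fun u => phi u - u) (Ici kappa) := by
  refine strictMonoOn_of_deriv_pos (convex_Ici _)
    (continuousOn_phi.sub continuousOn_id) fun u hu => ?_
  rw [interior_Ici, mem_Ioi] at hu
  have hderiv : HasDerivAt (fun u => phi u - u) (sinh u / sinh (phi u) - 1) u :=
    (hasDerivAt_phi hu).sub (hasDerivAt_id' u)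
  rw [hderiv.deriv, sub_pos, one_lt_div (sinh_pos_iff.2 (phi_pos hu))]
  exact sinh_lt_sinh.2 (phi_lt_self hu.le)

lemma strictMonoOn_phi_div_self : StrictMonoOn (fun u => phi u / u) (Ici kappa) := by
  intro u hu v hv huv
  have hu0 : 0 < u := kappa_pos.trans_le hu
  have hmono : phi u - u < phi v - v := strictMonoOn_phi_sub_self hu hv huv
  have hlt : phi u < u := phi_lt_self hu
  rw [div_lt_div_iff₀ hu0 (hu0.trans huv)]
  nlinarith

lemma continuousOn_phi_div_self : ContinuousOn (fun u => phi u / u) (Ici kappa) :=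
  continuousOn_phi.div continuousOn_id fun _ hu => (kappa_pos.trans_le hu).ne'

lemma kappa_lt_of_two_le_sq {s : ℝ} (hs0 : 0 < s) (hs : 2 ≤ s ^ 2) : kappa < s := by
  rw [kappa_lt_iff hs0.le]
  linarith [one_add_sq_div_two_le_cosh hs0.le]

lemma self_sub_inv_lt_phi {s : ℝ} (hs0 : 0 < s) (hs : 2 ≤ s ^ 2) : s - 1 / s < phi s := by
  have hks := kappa_lt_of_two_le_sq hs0 hs
  set a := phi s
  have ha0 : 0 ≤ a := phi_nonneg hks.le
  have hca : cosh a = cosh s - 1 / 2 := cosh_phi hks.le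
  have hsinh : s / 2 < sinh a := by
    have hsq : s ^ 2 / 4 < sinh a ^ 2 := by
      rw [sinh_sq, hca]
      nlinarith [one_add_sq_div_two_le_cosh hs0.le]
    nlinarith [sinh_nonneg_iff.2 ha0]
  have hconv : (s - a) * sinh a ≤ 1 / 2 := by
    have := cosh_add_ge_cosh_add_mul_sinh ha0 (sub_nonneg.2 (phi_lt_self hks.le).le)
    rw [add_sub_cancel, hca] at this
    linarith
  have hgap : (s - a) * s < 1 := by nlinarith [phi_lt_self hks.le]
  linarith [(lt_div_iff₀ hs0).2 hgap]

lemma one_sub_inv_lt_phi_sqrt_div_sqrt {x : ℝ} (hx : 2 ≤ x) : 1 - 1 / x < phi √x / √x := by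
  have hs0 : 0 < √x := Real.sqrt_pos.2 (by linarith)
  have hs2 : √x ^ 2 = x := Real.sq_sqrt (by linarith)
  calc 1 - 1 / x = (√x - 1 / √x) / √x := by field_simp; rw [hs2]; ring
    _ < phi √x / √x := by gcongr; exact self_sub_inv_lt_phi hs0 (hs2.symm ▸ hx)

theorem exists_unique_upsilon_general (p m : ℕ) (hm : (m : ℤ) ≤ (p : ℤ) - 2) :
    ∃ υ : ℝ, kappa < υ ∧ phi υ / υ = ((m : ℝ) + 1) / p ∧
      (∀ υ' : ℝ, kappa < υ' → phi υ' / υ' = ((m : ℝ) + 1) / p → υ' = υ) ∧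
      (∀ u : ℝ, kappa < u →
        (((m : ℝ) + 1) / p < phi u / u ↔ υ < u) ∧
        (phi u / u < ((m : ℝ) + 1) / p ↔ u < υ)) ∧
      υ < Real.sqrt p := by
  have hp : (2 : ℝ) ≤ p := by exact_mod_cast (show (2 : ℤ) ≤ p by omega)
  have hs0 : 0 < √(p : ℝ) := Real.sqrt_pos.2 (by linarith)
  have hks : kappa < √(p : ℝ) := kappa_lt_of_two_le_sq hs0 (by rwa [Real.sq_sqrt (by linarith)])
  have hq : ((m : ℝ) + 1) / p < phi √(p : ℝ) / √(p : ℝ) := by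
    refine lt_of_le_of_lt ?_ (one_sub_inv_lt_phi_sqrt_div_sqrt hp)
    rw [one_sub_div (by positivity)]
    gcongr
    linarith [show (m : ℝ) ≤ p - 2 by exact_mod_cast hm]
  have hr := strictMonoOn_phi_div_self
  obtain ⟨υ, ⟨hκυ, hυs⟩, hυ⟩ :=
    intermediate_value_Ioo hks.le (continuousOn_phi_div_self.mono Icc_subset_Ici_self)
    (show ((m : ℝ) + 1) / p ∈ Ioo (phi kappa / kappa) (phi √(p : ℝ) / √(p : ℝ)) by
      rw [phi_kappa, zero_div]; exact ⟨by positivity, hq⟩)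
  refine ⟨υ, hκυ, hυ, fun υ' hκυ' hυ' => hr.injOn hκυ'.le hκυ.le (hυ'.trans hυ.symm),
    fun u hu => ?_, hυs⟩
  rw [← hυ]
  exact ⟨hr.lt_iff_lt hκυ.le hu.le, hr.lt_iff_lt hu.le hκυ.le⟩

theorem exists_unique_upsilon (p m : ℕ) (hp : 1 ≤ p) (hm : (m : ℤ) ≤ (p : ℤ) - 2) :
    ∃ υ : ℝ, kappa < υ ∧ phi υ / υ = ((m : ℝ) + 1) / p ∧
      (∀ υ' : ℝ, kappa < υ' → phi υ' / υ' = ((m : ℝ) + 1) / p → υ' = υ) ∧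
      (∀ u : ℝ, kappa < u →
        (((m : ℝ) + 1) / p < phi u / u ↔ υ < u) ∧
        (phi u / u < ((m : ℝ) + 1) / p ↔ u < υ)) ∧
      υ < Real.sqrt p :=
  exists_unique_upsilon_general p m hm
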